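/- arXiv:1607.05956 — 6 statements merged into one kernel-verified Lean document; each statement's English description precedes it below -/
import Mathlib

section
/- Let N be a Petri net and I ⊆ ℕ^P a downward-closed invariant (i.e., I contains every marking reachable from m_init, and is downward-closed). Define U_0 = ↑{m_final} if m_final ∈ I and U_0 = ∅ otherwise, and U_{k+1} = ↑(pre(U_k) ∩ I) ∪ U_k. Then m_final is in the coverability set of N if and only if m_init ∈ ⋃_k U_k. -/
open Classical

/-- One step of transition `t`: `F p t` tokens consumed from `p`, `G t p` produced. -/
def Step {P T : Type*} (F : P → T → ℕ) (G : T → P → ℕ) (t : T) (m m' : P → ℕ) : Prop :=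
  ∀ p, F p t ≤ m p ∧ m' p = m p - F p t + G t p

/-- One-step relation (union over transitions). -/
def Step1 {P T : Type*} (F : P → T → ℕ) (G : T → P → ℕ) (m m' : P → ℕ) : Prop :=
  ∃ t, Step F G t m m'

/-- Many-step reachability. -/
def Reach {P T : Type*} (F : P → T → ℕ) (G : T → P → ℕ) : (P → ℕ) → (P → ℕ) → Prop :=
  Relation.ReflTransGen (Step1 F G)

/-- Upward closure. -/
def up {P : Type*} (S : Set (P → ℕ)) : Set (P → ℕ) := {u | ∃ m ∈ S, m ≤ u}

/-- Downward closure. -/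
def down {P : Type*} (S : Set (P → ℕ)) : Set (P → ℕ) := {d | ∃ m ∈ S, d ≤ m}

def UpwardClosed {P : Type*} (S : Set (P → ℕ)) : Prop := ∀ ⦃m m' : P → ℕ⦄, m ∈ S → m ≤ m' → m' ∈ S

def DownwardClosed {P : Type*} (S : Set (P → ℕ)) : Prop := ∀ ⦃m m' : P → ℕ⦄, m ∈ S → m' ≤ m → m' ∈ S

/-- One-step predecessors of `S`. -/
def pre {P T : Type*} (F : P → T → ℕ) (G : T → P → ℕ) (S : Set (P → ℕ)) : Set (P → ℕ) :=
  {m | ∃ m' ∈ S, Step1 F G m m'}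

/-- Predecessors via transition `t`. -/
def preT {P T : Type*} (F : P → T → ℕ) (G : T → P → ℕ) (t : T) (S : Set (P → ℕ)) : Set (P → ℕ) :=
  {m | ∃ m' ∈ S, Step F G t m m'}

/-- Many-step predecessors of `S`. -/
def preStar {P T : Type*} (F : P → T → ℕ) (G : T → P → ℕ) (S : Set (P → ℕ)) : Set (P → ℕ) :=
  {m | ∃ m' ∈ S, Reach F G m m'}

/-- The coverability set. -/
def Cov {P T : Type*} (F : P → T → ℕ) (G : T → P → ℕ) (minit : P → ℕ) : Set (P → ℕ) :=
  down {m | Reach F G minit m}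

/-- Pruned backward iteration sequence. -/
noncomputable def Useq {P T : Type*} (F : P → T → ℕ) (G : T → P → ℕ)
    (I : Set (P → ℕ)) (mfin : P → ℕ) : ℕ → Set (P → ℕ)
  | 0 => if mfin ∈ I then up {mfin} else ∅
  | k + 1 => up (pre F G (Useq F G I mfin k) ∩ I) ∪ Useq F G I mfin k

lemma step_mono' {P T : Type*} (F : P → T → ℕ) (G : T → P → ℕ) {t : T} {m m' n : P → ℕ}
    (h : Step F G t m m') (hle : m ≤ n) : ∃ n', Step F G t n n' ∧ m' ≤ n' := by
  refine ⟨fun p => n p - F p t + G t p, fun p => ⟨le_trans (h p).1 (hle p), rfl⟩, fun p => ?_⟩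
  rw [(h p).2]
  exact Nat.add_le_add_right (Nat.sub_le_sub_right (hle p) _) _

lemma reach_mono' {P T : Type*} (F : P → T → ℕ) (G : T → P → ℕ) {m m' n : P → ℕ}
    (h : Reach F G m m') (hle : m ≤ n) : ∃ n', Reach F G n n' ∧ m' ≤ n' := by
  induction h using Relation.ReflTransGen.head_induction_on generalizing n with
  | refl => exact ⟨n, Relation.ReflTransGen.refl, hle⟩
  | head hstep _ ih =>
    obtain ⟨t, hs⟩ := hstep
    obtain ⟨n₁, hs1, hle1⟩ := step_mono' F G hs hle
    obtain ⟨n', hr, hle'⟩ := ih hle1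
    exact ⟨n', Relation.ReflTransGen.head ⟨t, hs1⟩ hr, hle'⟩

theorem stmt4 {P T : Type*} (F : P → T → ℕ) (G : T → P → ℕ)
    (minit mfin : P → ℕ) (I : Set (P → ℕ))
    (hInv : {m | Reach F G minit m} ⊆ I) (hDown : DownwardClosed I) :
    mfin ∈ Cov F G minit ↔ minit ∈ ⋃ k, Useq F G I mfin k := by
  constructor
  · rintro ⟨m, hm, hle⟩
    have H : ∀ a, Reach F G a m → Reach F G minit a → a ∈ ⋃ k, Useq F G I mfin k := by
      intro a hab
      induction hab using Relation.ReflTransGen.head_induction_on with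
      | refl =>
        intro hra
        have hmI : m ∈ I := hInv hra
        have hfinI : mfin ∈ I := hDown hmI hle
        refine Set.mem_iUnion.2 ⟨0, ?_⟩
        simp only [Useq, if_pos hfinI]
        exact ⟨mfin, rfl, hle⟩
      | @head a c hstep htail ih =>
        intro hra
        have hrc : Reach F G minit c := hra.tail hstep
        obtain ⟨k, hk⟩ := Set.mem_iUnion.1 (ih hrc)
        refine Set.mem_iUnion.2 ⟨k + 1, Or.inl ?_⟩
        exact ⟨a, ⟨⟨c, hk, hstep⟩, hInv hra⟩, le_refl a⟩
    exact H minit hm Relation.ReflTransGen.refl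
  · intro h
    obtain ⟨k, hk⟩ := Set.mem_iUnion.1 h
    have H : ∀ k (m : P → ℕ), m ∈ Useq F G I mfin k →
        ∃ m', mfin ≤ m' ∧ Reach F G m m' := by
      intro k
      induction k with
      | zero =>
        intro m hm
        simp only [Useq] at hm
        split_ifs at hm with h0
        · obtain ⟨x, hx, hxm⟩ := hm
          rw [Set.mem_singleton_iff] at hx
          exact ⟨m, hx ▸ hxm, Relation.ReflTransGen.refl⟩
        · exact absurd hm (Set.notMem_empty m)
      | succ k ih =>
        intro m hm
        rcases hm with hm | hm
        · obtain ⟨x, ⟨⟨y, hy, hstep⟩, _⟩, hxm⟩ := hm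
          obtain ⟨t, hs⟩ := hstep
          obtain ⟨n₁, hs1, hle1⟩ := step_mono' F G hs hxm
          obtain ⟨m', hle', hr⟩ := ih y hy
          obtain ⟨n', hrn, hlen⟩ := reach_mono' F G hr hle1
          exact ⟨n', le_trans hle' hlen, Relation.ReflTransGen.head ⟨t, hs1⟩ hrn⟩
        · exact ih m hm
    obtain ⟨m', hle, hr⟩ := H k minit hk
    exact ⟨m', hr, hle⟩
end

section
/- Let Z be the maximal set of places such that I_Z = {m | ∀ p ∈ Z, m(p)=0} is an inductive invariant containing m_init. For every transition t and every set Q ⊆ P \ Z, the set prop_t(Q) is contained in P \ Z, where prop_t(Q) = {q | F(t,q) > 0} if F(p,t) = 0 for all p ∈ P \ Q, and prop_t(Q) = ∅ otherwise. -/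
open Classical

def IZ {P : Type*} (Z : Set P) : Set (P → ℕ) := {m | ∀ p ∈ Z, m p = 0}

def GoodZ {P T : Type*} (F : P → T → ℕ) (G : T → P → ℕ) (minit : P → ℕ) (Z : Set P) : Prop :=
  minit ∈ IZ Z ∧ ∀ t m m', m ∈ IZ Z → Step F G t m m' → m' ∈ IZ Z

/-- The propagation operator. -/
def propt {P T : Type*} (F : P → T → ℕ) (G : T → P → ℕ) (t : T) (Q : Set P) : Set P :=
  {q | (∀ p ∉ Q, F p t = 0) ∧ 0 < G t q}

theorem stmt9 {P T : Type*} [Fintype P] (F : P → T → ℕ) (G : T → P → ℕ) (minit : P → ℕ)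
    (Z : Set P) (hZ : GoodZ F G minit Z ∧ ∀ Z', GoodZ F G minit Z' → Z' ⊆ Z)
    (t : T) (Q : Set P) (hQ : Q ⊆ Zᶜ) :
    propt F G t Q ⊆ Zᶜ := by
  rintro q ⟨hF, hG⟩ hqZ
  have hm : (fun p => F p t) ∈ IZ Z := fun p hp => hF p (fun hQp => hQ hQp hp)
  have hstep : Step F G t (fun p => F p t) (fun p => G t p) := by
    intro p; exact ⟨le_refl _, by simp⟩
  have := hZ.1.2 t _ _ hm hstep q hqZ
  omega
end

section
/- Define Q_0 = {q ∈ P | m_init(q) > 0} and Q_{k+1} = Q_k ∪ ⋃_{t∈T} prop_t(Q_k), and Q = ⋃_k Q_k. Then Z = P \ Q, where Z is the maximal set of places such that I_Z = {m | ∀ p ∈ Z, m(p)=0} is an inductive invariant containing m_init. -/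
open Classical

/-- Sign-analysis propagation sequence. -/
def Qseq {P T : Type*} (F : P → T → ℕ) (G : T → P → ℕ) (minit : P → ℕ) : ℕ → Set P
  | 0 => {q | 0 < minit q}
  | k + 1 => Qseq F G minit k ∪ ⋃ t : T, propt F G t (Qseq F G minit k)

theorem stmt10 {P T : Type*} [Fintype P] [Fintype T]
    (F : P → T → ℕ) (G : T → P → ℕ) (minit : P → ℕ)
    (Z : Set P) (hZ : GoodZ F G minit Z ∧ ∀ Z', GoodZ F G minit Z' → Z' ⊆ Z) :
    Z = (⋃ k, Qseq F G minit k)ᶜ := by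
  classical
  set Q : Set P := ⋃ k, Qseq F G minit k with hQdef
  have hmono : ∀ {k j : ℕ}, k ≤ j → Qseq F G minit k ⊆ Qseq F G minit j := by
    intro k j h
    induction h with
    | refl => exact subset_rfl
    | step _ ih => exact ih.trans (Set.subset_union_left)
  -- Z ⊆ Qᶜ : by induction, Qseq k is disjoint from Z
  have hdisj : ∀ k, ∀ p ∈ Qseq F G minit k, p ∉ Z := by
    intro k
    induction k with
    | zero =>
      intro p hp hpZ
      have := hZ.1.1 p hpZ
      simp [Qseq] at hp
      omega
    | succ k ih =>
      intro p hp hpZ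
      rcases hp with hp | hp
      · exact ih p hp hpZ
      · rcases Set.mem_iUnion.1 hp with ⟨t, hF, hG⟩
        set m : P → ℕ := fun p' => F p' t with hm
        set m' : P → ℕ := fun p' => G t p' with hm'
        have hstep : Step F G t m m' := by
          intro p'; constructor
          · exact le_rfl
          · simp [hm, hm']
        have hmI : m ∈ IZ Z := by
          intro p' hp'
          exact hF p' (fun h => ih p' h hp')
        have := hZ.1.2 t m m' hmI hstep p hpZ
        simp [hm'] at this
        omega
  -- Qᶜ is Good, hence Qᶜ ⊆ Z
  have hstab : ∃ k, ∀ p, p ∈ Q → p ∈ Qseq F G minit k := by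
    have h1 : ∀ p : P, ∃ k, p ∈ Q → p ∈ Qseq F G minit k := by
      intro p
      by_cases hp : p ∈ Q
      · rcases Set.mem_iUnion.1 hp with ⟨k, hk⟩
        exact ⟨k, fun _ => hk⟩
      · exact ⟨0, fun h => absurd h hp⟩
    choose f hf using h1
    exact ⟨Finset.univ.sup f, fun p hp =>
      hmono (Finset.le_sup (Finset.mem_univ p)) (hf p hp)⟩
  obtain ⟨k, hk⟩ := hstab
  have hgood : GoodZ F G minit Qᶜ := by
    constructor
    · intro p hp
      by_contra h
      exact hp (Set.mem_iUnion.2 ⟨0, by simpa [Qseq] using Nat.pos_of_ne_zero h⟩)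
    · intro t m m' hmI hstep p hp
      have hmp : m p = 0 := hmI p hp
      have hFp : F p t = 0 := le_antisymm (hmp ▸ (hstep p).1) (Nat.zero_le _)
      have hGp : G t p = 0 := by
        by_contra hG
        apply hp
        refine Set.mem_iUnion.2 ⟨k + 1, Or.inr (Set.mem_iUnion.2 ⟨t, ?_, Nat.pos_of_ne_zero hG⟩)⟩
        intro p' hp'
        by_contra hF'
        have hmp' : 0 < m p' := lt_of_lt_of_le (Nat.pos_of_ne_zero hF') (hstep p').1
        have : p' ∉ Q := fun hq => hp' (hk p' hq)
        have := hmI p' this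
        omega
      rw [(hstep p).2, hmp, hFp, hGp]
  have h1 : Qᶜ ⊆ Z := hZ.2 _ hgood
  have h2 : Z ⊆ Qᶜ := fun p hpZ hpQ => by
    rcases Set.mem_iUnion.1 hpQ with ⟨k, hk⟩
    exact hdisj k p hk hpZ
  exact le_antisymm h2 h1
end

section
/- The set I_Q' = {m ∈ ℕ^P | ∀ p ∈ P \ Q, m(p) = 0}, where Q = ⋃_k Q_k is the fixpoint of the sign-analysis propagation, is an inductive invariant: m_init ∈ I_Q', and if m ∈ I_Q' and m →_t m' then m' ∈ I_Q'. -/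
open Classical

theorem stmt11 {P T : Type*} [Fintype P] [Fintype T]
    (F : P → T → ℕ) (G : T → P → ℕ) (minit : P → ℕ) :
    minit ∈ {m : P → ℕ | ∀ p ∉ ⋃ k, Qseq F G minit k, m p = 0} ∧
    ∀ t m m', m ∈ {m : P → ℕ | ∀ p ∉ ⋃ k, Qseq F G minit k, m p = 0} → Step F G t m m' →
      m' ∈ {m : P → ℕ | ∀ p ∉ ⋃ k, Qseq F G minit k, m p = 0} := by
  have mono : ∀ {j k : ℕ}, j ≤ k → Qseq F G minit j ⊆ Qseq F G minit k := by
    intro j k hjk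
    induction hjk with
    | refl => exact fun _ h => h
    | step _ ih => exact fun p hp => Or.inl (ih hp)
  constructor
  · intro p hp
    by_contra h
    exact hp (Set.mem_iUnion.mpr ⟨0, Nat.pos_of_ne_zero h⟩)
  · intro t m m' hm hstep p hp
    have key : ∀ p : P, ∃ N, F p t ≠ 0 → p ∈ Qseq F G minit N := by
      intro q
      by_cases h : F q t = 0
      · exact ⟨0, fun h' => absurd h h'⟩
      · have hq : q ∈ ⋃ k, Qseq F G minit k := by
          by_contra hq
          have := hm q hq
          have := (hstep q).1
          omega
        obtain ⟨N, hN⟩ := Set.mem_iUnion.mp hq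
        exact ⟨N, fun _ => hN⟩
    choose f hf using key
    set N := Finset.univ.sup f with hNdef
    have hprop : ∀ q ∉ Qseq F G minit N, F q t = 0 := by
      intro q hq
      by_contra h
      exact hq (mono (Finset.le_sup (Finset.mem_univ q)) (hf q h))
    have hGp : G t p = 0 := by
      by_contra h
      apply hp
      apply Set.mem_iUnion.mpr ⟨N + 1, ?_⟩
      exact Or.inr (Set.mem_iUnion.mpr ⟨t, hprop, Nat.pos_of_ne_zero h⟩)
    have h1 := (hstep p).2
    have h2 := hm p hp
    omega
end

section
/- For the Petri net with places p1, p2, p3, transitions t1 (consumes 1 from p1, produces 1 in p2), t2 (consumes 1 from p2, produces 2 in p3), t3 (consumes 1 from p3, produces 2 in p2), and initial marking (1,0,0): the marking (1,1,1) is limit-reachable under the continuous semantics (i.e., (1,0,0) ⇝^∞ (1,1,1)) but not continuously reachable ((1,0,0) ⇝* (1,1,1) does not hold). -/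
/-!
Firing `t1` with a tiny rate `ε` and then alternating `t2`, `t3` at full rate quadruples the
content of `p2` in each round; for `ε = 3/2 · 4⁻ⁿ` this reaches `(1 - ε, 3/2, 0)`, and `t2` at
rate `1/2` then gives `(1 - ε, 1, 1)`. These markings converge to `(1, 1, 1)`.

Exact reachability fails because no transition produces into `p1`: a step of positive rate out
of `(1, 0, 0)` must be a firing of `t1`, which pushes `p1` below `1` for good.
-/

open Classical

def CStep {P T : Type*} (F : P → T → ℕ) (G : T → P → ℕ) (r : ℚ) (t : T)
    (m m' : P → ℚ) : Prop :=
  0 ≤ r ∧ ∀ p, r * (F p t : ℚ) ≤ m p ∧ m' p = m p - r * (F p t : ℚ) + r * (G t p : ℚ)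

def CStep1 {P T : Type*} (F : P → T → ℕ) (G : T → P → ℕ) (m m' : P → ℚ) : Prop :=
  ∃ r t, CStep F G r t m m'

def CReach {P T : Type*} (F : P → T → ℕ) (G : T → P → ℕ) : (P → ℚ) → (P → ℚ) → Prop :=
  Relation.ReflTransGen (CStep1 F G)

/-- Limit-reachability: `m'` is the coordinatewise limit of continuously reachable markings. -/
def CLimReach {P T : Type*} (F : P → T → ℕ) (G : T → P → ℕ) (m m' : P → ℚ) : Prop :=
  ∃ seq : ℕ → (P → ℚ), (∀ k, CReach F G m (seq k)) ∧
    ∀ p, Filter.Tendsto (fun k => seq k p) Filter.atTop (nhds (m' p))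

/-- `Fex p t` = tokens consumed from place `p` by transition `t`. -/
def Fex : Fin 3 → Fin 3 → ℕ := ![![1, 0, 0], ![0, 1, 0], ![0, 0, 1]]

/-- `Gex t p` = tokens produced in place `p` by transition `t`. -/
def Gex : Fin 3 → Fin 3 → ℕ := ![![0, 1, 0], ![0, 0, 2], ![0, 2, 0]]

section ContinuousStep

variable {P T : Type*} {F : P → T → ℕ} {G : T → P → ℕ} {r : ℚ} {t : T} {m m' : P → ℚ}

lemma CStep.eq_of_rate_eq_zero (h : CStep F G 0 t m m') : m' = m := by
  funext p
  simp [(h.2 p).2]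

lemma CStep.rate_eq_zero_of_apply_eq_zero {p : P} (h : CStep F G r t m m') (hF : 0 < F p t)
    (hm : m p = 0) : r = 0 := by
  have hF' : (0 : ℚ) < F p t := by exact_mod_cast hF
  have hle := (h.2 p).1
  rw [hm] at hle
  nlinarith [h.1]

lemma CStep.apply_le_of_forall_eq_zero {p : P} (h : CStep F G r t m m') (hG : ∀ t, G t p = 0) :
    m' p ≤ m p := by
  rw [(h.2 p).2, hG]
  have hr := h.1
  simp only [Nat.cast_zero, mul_zero, add_zero, sub_le_self_iff]
  positivity

end ContinuousStep

lemma cstep1_fire_t1 {a b c r : ℚ} (hr : 0 ≤ r) (hb : 0 ≤ b) (hc : 0 ≤ c) (h : r ≤ a) :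
    CStep1 Fex Gex ![a, b, c] ![a - r, b + r, c] := by
  refine ⟨r, 0, hr, fun p => ?_⟩
  fin_cases p <;> simp [Fex, Gex] <;> linarith

lemma cstep1_fire_t2 {a b c r : ℚ} (hr : 0 ≤ r) (ha : 0 ≤ a) (hc : 0 ≤ c) (h : r ≤ b) :
    CStep1 Fex Gex ![a, b, c] ![a, b - r, c + 2 * r] := by
  refine ⟨r, 1, hr, fun p => ?_⟩
  fin_cases p <;> simp [Fex, Gex] <;> (try constructor) <;> linarith

lemma cstep1_fire_t3 {a b c r : ℚ} (hr : 0 ≤ r) (ha : 0 ≤ a) (hb : 0 ≤ b) (h : r ≤ c) :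
    CStep1 Fex Gex ![a, b, c] ![a, b + 2 * r, c - r] := by
  refine ⟨r, 2, hr, fun p => ?_⟩
  fin_cases p <;> simp [Fex, Gex] <;> (try constructor) <;> linarith

lemma creach_pump {a s : ℚ} (ha : 0 ≤ a) (hs : 0 ≤ s) (n : ℕ) :
    CReach Fex Gex ![a, s, 0] ![a, 4 ^ n * s, 0] := by
  induction n with
  | zero =>
    rw [pow_zero, one_mul]
    exact .refl
  | succ n ih =>
    have hb : 0 ≤ 4 ^ n * s := by positivity
    have h2 := cstep1_fire_t2 (a := a) (c := 0) hb ha le_rfl le_rfl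
    have h3 := cstep1_fire_t3 (a := a) (b := 0) (by positivity : 0 ≤ 2 * (4 ^ n * s)) ha
      le_rfl le_rfl
    rw [sub_self, zero_add] at h2 h3
    rw [show (2 : ℚ) * (2 * (4 ^ n * s)) = 4 ^ (n + 1) * s by ring] at h3
    exact (ih.tail h2).tail h3

lemma creach_init_approx (n : ℕ) :
    CReach Fex Gex ![1, 0, 0] ![1 - (3 / 2) / 4 ^ (n + 1), 1, 1] := by
  set ε : ℚ := (3 / 2) / 4 ^ (n + 1) with hε
  have hε0 : 0 ≤ ε := by positivity
  have hε1 : ε ≤ 1 := by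
    rw [hε, div_le_one (by positivity)]
    calc (3 / 2 : ℚ) ≤ 4 := by norm_num
      _ ≤ 4 ^ (n + 1) := le_self_pow₀ (by norm_num) n.succ_ne_zero
  have h1 : CStep1 Fex Gex ![1, 0, 0] ![1 - ε, ε, 0] := by
    simpa using cstep1_fire_t1 hε0 le_rfl le_rfl hε1
  have hpump : CReach Fex Gex ![1 - ε, ε, 0] ![1 - ε, 3 / 2, 0] := by
    have e : (4 : ℚ) ^ (n + 1) * ε = 3 / 2 := by
      rw [hε]
      field_simp
    simpa only [e] using creach_pump (a := 1 - ε) (by linarith) hε0 (n + 1)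
  have h2 : CStep1 Fex Gex ![1 - ε, 3 / 2, 0] ![1 - ε, 1, 1] := by
    have h := cstep1_fire_t2 (a := 1 - ε) (b := 3 / 2) (c := 0) (by norm_num : (0 : ℚ) ≤ 1 / 2)
      (by linarith) le_rfl (by norm_num)
    norm_num at h
    exact h
  exact ((Relation.ReflTransGen.single h1).trans hpump).tail h2

lemma cstep1_init_eq_or_lt {m : Fin 3 → ℚ} (h : CStep1 Fex Gex ![1, 0, 0] m) :
    m = ![1, 0, 0] ∨ m 0 < 1 := by
  obtain ⟨r, t, hs⟩ := h
  rcases hs.1.eq_or_lt with rfl | hr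
  · exact .inl hs.eq_of_rate_eq_zero
  · right
    fin_cases t
    · have h0 := (hs.2 0).2
      simp [Fex, Gex] at h0
      linarith
    · exact absurd (hs.rate_eq_zero_of_apply_eq_zero (p := 1) (by decide) rfl) hr.ne'
    · exact absurd (hs.rate_eq_zero_of_apply_eq_zero (p := 2) (by decide) rfl) hr.ne'

lemma creach_init_eq_or_lt {m : Fin 3 → ℚ} (h : CReach Fex Gex ![1, 0, 0] m) :
    m = ![1, 0, 0] ∨ m 0 < 1 := by
  induction h with
  | refl => exact .inl rfl
  | tail _ hs ih =>
    rcases ih with rfl | hlt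
    · exact cstep1_init_eq_or_lt hs
    · obtain ⟨r, t, hs⟩ := hs
      exact .inr ((hs.apply_le_of_forall_eq_zero fun t => by fin_cases t <;> rfl).trans_lt hlt)

theorem stmt15 :
    CLimReach Fex Gex ![1, 0, 0] ![1, 1, 1] ∧ ¬ CReach Fex Gex ![1, 0, 0] ![1, 1, 1] := by
  constructor
  · refine ⟨fun n => ![1 - (3 / 2) / 4 ^ (n + 1), 1, 1], creach_init_approx, fun p => ?_⟩
    have hpow : Filter.Tendsto (fun n : ℕ => (4 : ℚ) ^ (n + 1)) Filter.atTop Filter.atTop :=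
      (tendsto_pow_atTop_atTop_of_one_lt (by norm_num)).comp (Filter.tendsto_add_atTop_nat 1)
    have hlim := (tendsto_const_nhds (x := (3 / 2 : ℚ)).div_atTop hpow).const_sub 1
    fin_cases p <;> simp
    simpa using hlim
  · intro h
    rcases creach_init_eq_or_lt h with h | h
    · simpa using congrFun h 1
    · simp at h
end

section
/- The pruned backward coverability iteration terminates: for any downward-closed invariant I and target m_final, the sequence U_0 = (↑{m_final} if m_final ∈ I else ∅), U_{k+1} = ↑(pre(U_k) ∩ I) ∪ U_k reaches a fixpoint, i.e., there exists h with U_{h+1} = U_h, and then U_k = U_h for all k ≥ h. -/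
/-! A strictly increasing chain of upward-closed sets would yield markings `f k ∈ U (k+1) \ U k`.
By Dickson's lemma `f i ≤ f j` for some `i < j`; then `f i ∈ U j` forces `f j ∈ U j`,
a contradiction. Once `U (h+1) = U h`, the recurrence keeps the sequence constant. -/

open Classical

theorem exists_succ_eq_of_monotone_isUpperSet {α : Type*} [Preorder α] [WellQuasiOrderedLE α]
    {U : ℕ → Set α} (hmono : Monotone U) (hup : ∀ k, IsUpperSet (U k)) :
    ∃ h, U (h + 1) = U h := by
  by_contra! hne
  have hnew : ∀ k, ∃ m ∈ U (k + 1), m ∉ U k := fun k =>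
    Set.not_subset.mp fun hsub => hne k (hsub.antisymm (hmono k.le_succ))
  choose f hf_mem hf_new using hnew
  obtain ⟨i, j, hij, hle⟩ := wellQuasiOrdered_le f
  exact hf_new j (hup j hle (hmono hij (hf_mem i)))

theorem forall_le_eq_of_succ_eq {α : Type*} {u : ℕ → α} {g : α → α}
    (hu : ∀ k, u (k + 1) = g (u k)) {h : ℕ} (hh : u (h + 1) = u h) :
    ∀ k, h ≤ k → u k = u h := by
  intro k hk
  induction k, hk using Nat.le_induction with
  | base => rfl
  | succ k _ ih => rw [hu, ih, ← hu, hh]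

theorem isUpperSet_up {P : Type*} (S : Set (P → ℕ)) : IsUpperSet (up S) :=
  fun _ _ hab ⟨m, hm, hle⟩ => ⟨m, hm, hle.trans hab⟩

section Useq

variable {P T : Type*} (F : P → T → ℕ) (G : T → P → ℕ) (I : Set (P → ℕ)) (mfin : P → ℕ)

theorem isUpperSet_Useq (k : ℕ) : IsUpperSet (Useq F G I mfin k) := by
  induction k with
  | zero =>
    rw [Useq]
    split
    · exact isUpperSet_up _
    · exact isUpperSet_empty
  | succ k ih => exact (isUpperSet_up _).union ih

theorem Useq_monotone : Monotone (Useq F G I mfin) :=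
  monotone_nat_of_le_succ fun _ => Set.subset_union_right

end Useq

theorem stmt18_general {P T : Type*} [Fintype P] (F : P → T → ℕ) (G : T → P → ℕ)
    (mfin : P → ℕ) (I : Set (P → ℕ)) :
    ∃ h, Useq F G I mfin (h + 1) = Useq F G I mfin h ∧
      ∀ k, h ≤ k → Useq F G I mfin k = Useq F G I mfin h := by
  obtain ⟨h, hh⟩ := exists_succ_eq_of_monotone_isUpperSet (Useq_monotone F G I mfin)
    (isUpperSet_Useq F G I mfin)
  exact ⟨h, hh,
    forall_le_eq_of_succ_eq (g := fun S => up (pre F G S ∩ I) ∪ S) (fun _ => rfl) hh⟩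

theorem stmt18 {P T : Type*} [Fintype P] (F : P → T → ℕ) (G : T → P → ℕ)
    (mfin : P → ℕ) (I : Set (P → ℕ)) (hDown : DownwardClosed I) :
    ∃ h, Useq F G I mfin (h + 1) = Useq F G I mfin h ∧
      ∀ k, h ≤ k → Useq F G I mfin k = Useq F G I mfin h :=
  stmt18_general F G mfin I
end
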